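/- Let k be a field, S = k[x_1,…,x_q] a polynomial ring, λ an integral weight function on S, and g_1,…,g_N nonzero polynomials in S. Define the integral weight function λ̃ on S[ε_1,…,ε_N] by λ̃(x_j) = λ(x_j) and λ̃(ε_i) = (the maximal λ-weight of a term of g_i) = λ-weight of in_λ(g_i). Then for every nonzero f in the ideal (ε_1,…,ε_N) of S[ε_1,…,ε_N] such that substituting ε_i ↦ g_i into f yields 0, the λ̃-initial form in_{λ̃}(f) again lies in (ε_1,…,ε_N) and substituting ε_i ↦ in_λ(g_i) into in_{λ̃}(f) yields 0. In other words, the λ̃-initial form of any syzygy of (g_1,…,g_N) is a syzygy of the initial forms (in_λ(g_1),…,in_λ(g_N)). -/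

import Mathlib

/-! Substituting `ε_i ↦ g_i` sends every variable to a polynomial whose `λ`-weights are at most
the variable's `λ̃`-weight and whose top part is the variable's image under `ε_i ↦ in_λ(g_i)`.
Top-weight parts of products multiply, so for a polynomial of `λ̃`-weight at most `n` the
`λ`-weight-`n` component of its image under `ε_i ↦ g_i` is the image under `ε_i ↦ in_λ(g_i)` of
its `λ̃`-weight-`n` component. For `n` the top `λ̃`-weight of the syzygy `f` the former is `0` and
the latter is `in_{λ̃}(f)(ε ↦ in_λ(g))`. Membership in `(ε_1,…,ε_N)` holds because that ideal is
generated by weighted homogeneous elements. -/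

open MvPolynomial

noncomputable section

/-- The `λ`-weight of a monomial exponent vector: weights extend additively to monomials. -/
def monWeight {σ : Type*} (lam : σ → ℤ) (d : σ →₀ ℕ) : ℤ :=
  d.sum fun i m => (m : ℤ) * lam i

/-- The initial form `in_λ(f)`: the sum of the terms of `f` of maximal `λ`-weight. -/
def initialForm {σ K : Type*} [CommSemiring K] (lam : σ → ℤ) (f : MvPolynomial σ K) :
    MvPolynomial σ K :=
  ∑ d ∈ f.support.filter
      (fun d => ∀ e ∈ f.support, monWeight lam e ≤ monWeight lam d),
    monomial d (coeff d f)

/-- The maximal `λ`-weight of a term of `f` (with junk value `0` for `f = 0`);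
this is the `λ`-weight of `in_λ(f)`. -/
def maxWeight {σ K : Type*} [CommSemiring K] (lam : σ → ℤ) (f : MvPolynomial σ K) : ℤ :=
  (f.support.image (monWeight lam)).max.unbotD 0

open Finsupp

namespace MvPolynomial

section WeightedTotalDegree

variable {σ τ ι R M : Type*} [CommSemiring R] [AddCommMonoid M] [LinearOrder M] {w : σ → M}

theorem weightedTotalDegree'_le_iff {p : MvPolynomial σ R} {n : M} :
    weightedTotalDegree' w p ≤ n ↔ ∀ d ∈ p.support, weight w d ≤ n := by
  simp only [weightedTotalDegree', Finset.sup_le_iff, WithBot.coe_le_coe]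

theorem IsWeightedHomogeneous.weightedTotalDegree'_le {p : MvPolynomial σ R} {n : M}
    (hp : p.IsWeightedHomogeneous w n) : weightedTotalDegree' w p ≤ n :=
  weightedTotalDegree'_le_iff.mpr fun _ hd => (hp (mem_support_iff.mp hd)).le

theorem weightedHomogeneousComponent_eq_zero_of_le_of_lt {p : MvPolynomial σ R} {m n : M}
    (hp : weightedTotalDegree' w p ≤ m) (hmn : m < n) : weightedHomogeneousComponent w n p = 0 :=
  weightedHomogeneousComponent_eq_zero' n p fun d hd =>
    ((weightedTotalDegree'_le_iff.mp hp d hd).trans_lt hmn).ne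

variable [IsOrderedCancelAddMonoid M]

theorem weightedTotalDegree'_mul_le {p q : MvPolynomial σ R} {a b : M}
    (hp : weightedTotalDegree' w p ≤ a) (hq : weightedTotalDegree' w q ≤ b) :
    weightedTotalDegree' w (p * q) ≤ ↑(a + b) := by
  classical
  refine weightedTotalDegree'_le_iff.mpr fun d hd => ?_
  obtain ⟨x, hx, y, hy, rfl⟩ := Finset.mem_add.mp (support_mul p q hd)
  rw [map_add]
  exact add_le_add (weightedTotalDegree'_le_iff.mp hp x hx) (weightedTotalDegree'_le_iff.mp hq y hy)

theorem weightedHomogeneousComponent_mul_of_le {p q : MvPolynomial σ R} {a b : M}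
    (hp : weightedTotalDegree' w p ≤ a) (hq : weightedTotalDegree' w q ≤ b) :
    weightedHomogeneousComponent w (a + b) (p * q) =
      weightedHomogeneousComponent w a p * weightedHomogeneousComponent w b q := by
  classical
  ext e
  rw [coeff_weightedHomogeneousComponent]
  split_ifs with he
  · rw [coeff_mul, coeff_mul]
    refine Finset.sum_congr rfl fun ⟨x, y⟩ hxy => ?_
    simp only [coeff_weightedHomogeneousComponent]
    by_cases hx : coeff x p = 0
    · simp [hx]
    by_cases hy : coeff y q = 0
    · simp [hy]
    have hxy : weight w x + weight w y = a + b := by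
      rw [← map_add, Finset.HasAntidiagonal.mem_antidiagonal.mp hxy, he]
    obtain ⟨hxa, hyb⟩ := (add_eq_add_iff_eq_and_eq
      (weightedTotalDegree'_le_iff.mp hp x (mem_support_iff.mpr hx))
      (weightedTotalDegree'_le_iff.mp hq y (mem_support_iff.mpr hy))).mp hxy
    simp [hxa, hyb]
  · exact (((weightedHomogeneousComponent_isWeightedHomogeneous a p).mul
      (weightedHomogeneousComponent_isWeightedHomogeneous b q)).coeff_eq_zero e he).symm

theorem weightedTotalDegree'_prod_le (s : Finset ι) {p : ι → MvPolynomial σ R} {a : ι → M}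
    (h : ∀ i ∈ s, weightedTotalDegree' w (p i) ≤ a i) :
    weightedTotalDegree' w (∏ i ∈ s, p i) ≤ ↑(∑ i ∈ s, a i) := by
  classical
  induction s using Finset.induction with
  | empty => exact (isWeightedHomogeneous_one R w).weightedTotalDegree'_le
  | insert i s hi ih =>
    rw [Finset.prod_insert hi, Finset.sum_insert hi]
    exact weightedTotalDegree'_mul_le (h i (Finset.mem_insert_self i s))
      (ih fun j hj => h j (Finset.mem_insert_of_mem hj))

theorem weightedHomogeneousComponent_prod_of_le (s : Finset ι) {p : ι → MvPolynomial σ R}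
    {a : ι → M} (h : ∀ i ∈ s, weightedTotalDegree' w (p i) ≤ a i) :
    weightedHomogeneousComponent w (∑ i ∈ s, a i) (∏ i ∈ s, p i) =
      ∏ i ∈ s, weightedHomogeneousComponent w (a i) (p i) := by
  classical
  induction s using Finset.induction with
  | empty =>
    simpa using (isWeightedHomogeneous_one R w).weightedHomogeneousComponent_same
  | insert i s hi ih =>
    have hs : ∀ j ∈ s, weightedTotalDegree' w (p j) ≤ a j :=
      fun j hj => h j (Finset.mem_insert_of_mem hj)
    rw [Finset.prod_insert hi, Finset.sum_insert hi, Finset.prod_insert hi,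
      weightedHomogeneousComponent_mul_of_le (h i (Finset.mem_insert_self i s))
        (weightedTotalDegree'_prod_le s hs), ih hs]

theorem weightedTotalDegree'_pow_le {p : MvPolynomial σ R} {a : M}
    (hp : weightedTotalDegree' w p ≤ a) (k : ℕ) : weightedTotalDegree' w (p ^ k) ≤ ↑(k • a) := by
  simpa using weightedTotalDegree'_prod_le (Finset.range k) fun _ _ => hp

theorem weightedHomogeneousComponent_pow_of_le {p : MvPolynomial σ R} {a : M}
    (hp : weightedTotalDegree' w p ≤ a) (k : ℕ) :
    weightedHomogeneousComponent w (k • a) (p ^ k) = weightedHomogeneousComponent w a p ^ k := by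
  simpa using weightedHomogeneousComponent_prod_of_le (Finset.range k) fun _ _ => hp

variable {S : τ → MvPolynomial σ R} {W : τ → M}

theorem weightedTotalDegree'_aeval_monomial_le
    (hS : ∀ j, weightedTotalDegree' w (S j) ≤ W j) (d : τ →₀ ℕ) (c : R) :
    weightedTotalDegree' w (aeval S (monomial d c)) ≤ weight W d := by
  rw [aeval_monomial, algebraMap_eq, Finsupp.prod, ← zero_add (weight W d)]
  exact weightedTotalDegree'_mul_le (isWeightedHomogeneous_C w c).weightedTotalDegree'_le
    (weightedTotalDegree'_prod_le d.support fun j _ => weightedTotalDegree'_pow_le (hS j) (d j))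

theorem weightedHomogeneousComponent_aeval_monomial
    (hS : ∀ j, weightedTotalDegree' w (S j) ≤ W j) (d : τ →₀ ℕ) (c : R) :
    weightedHomogeneousComponent w (weight W d) (aeval S (monomial d c)) =
      aeval (fun j => weightedHomogeneousComponent w (W j) (S j)) (monomial d c) := by
  simp only [aeval_monomial, algebraMap_eq, weightedHomogeneousComponent_C_mul, weight_apply,
    Finsupp.prod]
  rw [Finsupp.sum, weightedHomogeneousComponent_prod_of_le d.support
    fun j _ => weightedTotalDegree'_pow_le (hS j) (d j)]
  exact congrArg _
    (Finset.prod_congr rfl fun j _ => weightedHomogeneousComponent_pow_of_le (hS j) _)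

theorem weightedHomogeneousComponent_aeval_of_le
    (hS : ∀ j, weightedTotalDegree' w (S j) ≤ W j) {f : MvPolynomial τ R} {n : M}
    (hf : weightedTotalDegree' W f ≤ n) :
    weightedHomogeneousComponent w n (aeval S f) =
      aeval (fun j => weightedHomogeneousComponent w (W j) (S j))
        (weightedHomogeneousComponent W n f) := by
  rw [f.as_sum, map_sum, map_sum, map_sum, map_sum]
  refine Finset.sum_congr rfl fun d hd => ?_
  have hmon := isWeightedHomogeneous_monomial W d (coeff d f) rfl
  rcases (weightedTotalDegree'_le_iff.mp hf d hd).eq_or_lt with rfl | hlt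
  · rw [hmon.weightedHomogeneousComponent_same, weightedHomogeneousComponent_aeval_monomial hS]
  · rw [weightedHomogeneousComponent_eq_zero_of_le_of_lt
      (weightedTotalDegree'_aeval_monomial_le hS d _) hlt,
      hmon.weightedHomogeneousComponent_ne n hlt.ne', map_zero]

end WeightedTotalDegree

attribute [local instance] weightedGradedAlgebra in
theorem weightedHomogeneousComponent_mem_span_range_X {σ ι R M : Type*} [CommSemiring R]
    [AddCommMonoid M] [DecidableEq M] (w : σ → M) (v : ι → σ) {p : MvPolynomial σ R}
    (hp : p ∈ Ideal.span (Set.range fun i => X (v i))) (n : M) :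
    weightedHomogeneousComponent w n p ∈ Ideal.span (Set.range fun i => X (v i)) :=
  weightedHomogeneousComponent_mem_of_mem R w
    (Ideal.homogeneous_span _ _ <| by
      rintro _ ⟨i, rfl⟩
      exact ⟨_, isWeightedHomogeneous_X R w (v i)⟩)
    hp n

end MvPolynomial

section InitialForm

variable {σ K : Type*} [CommSemiring K] (lam : σ → ℤ)

theorem monWeight_eq_weight (d : σ →₀ ℕ) : monWeight lam d = weight lam d := by
  simp [monWeight, weight_apply, Finsupp.sum, mul_comm]

theorem coe_maxWeight {f : MvPolynomial σ K} (hf : f ≠ 0) :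
    (maxWeight lam f : WithBot ℤ) = weightedTotalDegree' lam f := by
  have hmax : (f.support.image (monWeight lam)).max = weightedTotalDegree' lam f := by
    simp only [Finset.max_eq_sup_coe, Finset.sup_image, weightedTotalDegree', Function.comp_def,
      monWeight_eq_weight]
  obtain ⟨m, hm⟩ := WithBot.ne_bot_iff_exists.mp
    ((weightedTotalDegree'_eq_bot_iff lam f).not.mpr hf)
  rw [maxWeight, hmax, ← hm, WithBot.unbotD_coe]

theorem weightedTotalDegree'_le_maxWeight (f : MvPolynomial σ K) :
    weightedTotalDegree' lam f ≤ maxWeight lam f := by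
  rcases eq_or_ne f 0 with rfl | hf
  · simp [weightedTotalDegree'_zero]
  · exact (coe_maxWeight lam hf).ge

theorem initialForm_eq_weightedHomogeneousComponent (f : MvPolynomial σ K) :
    initialForm lam f = weightedHomogeneousComponent lam (maxWeight lam f) f := by
  classical
  rw [initialForm, weightedHomogeneousComponent_apply]
  refine Finset.sum_congr (Finset.filter_congr fun d hd => ?_) fun _ _ => rfl
  have hf : f ≠ 0 := ne_zero_iff.mpr ⟨d, MvPolynomial.mem_support_iff.mp hd⟩
  have hle : ∀ e ∈ f.support, weight lam e ≤ maxWeight lam f :=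
    weightedTotalDegree'_le_iff.mp (weightedTotalDegree'_le_maxWeight lam f)
  simp only [monWeight_eq_weight]
  constructor
  · intro h
    refine le_antisymm (hle d hd) ?_
    rw [← WithBot.coe_le_coe, coe_maxWeight lam hf]
    exact weightedTotalDegree'_le_iff.mpr h
  · intro h e he
    exact h ▸ hle e he

end InitialForm

theorem initialForm_syzygy_is_syzygy_of_initialForms_general
    {k : Type*} [Field k] (q N : ℕ) (lam : Fin q → ℤ)
    (g : Fin N → MvPolynomial (Fin q) k)
    (f : MvPolynomial (Fin q ⊕ Fin N) k)
    (hfε : f ∈ Ideal.span (Set.range fun i : Fin N =>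
      (X (Sum.inr i) : MvPolynomial (Fin q ⊕ Fin N) k)))
    (hfsyz : aeval (Sum.elim X g) f = 0) :
    initialForm (Sum.elim lam fun i => maxWeight lam (g i)) f ∈
        Ideal.span (Set.range fun i : Fin N =>
          (X (Sum.inr i) : MvPolynomial (Fin q ⊕ Fin N) k)) ∧
    aeval (Sum.elim X fun i => initialForm lam (g i))
        (initialForm (Sum.elim lam fun i => maxWeight lam (g i)) f) = 0 := by
  set lam' : Fin q ⊕ Fin N → ℤ := Sum.elim lam fun i => maxWeight lam (g i)
  rw [initialForm_eq_weightedHomogeneousComponent]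
  refine ⟨weightedHomogeneousComponent_mem_span_range_X lam' Sum.inr hfε _, ?_⟩
  have hbound : ∀ j, weightedTotalDegree' lam (Sum.elim X g j) ≤ lam' j
    | .inl a => (isWeightedHomogeneous_X k lam a).weightedTotalDegree'_le
    | .inr i => weightedTotalDegree'_le_maxWeight lam (g i)
  have htop : (fun j => weightedHomogeneousComponent lam (lam' j) (Sum.elim X g j)) =
      Sum.elim X fun i => initialForm lam (g i) := by
    funext j
    rcases j with a | i
    · exact (isWeightedHomogeneous_X k lam a).weightedHomogeneousComponent_same
    · exact (initialForm_eq_weightedHomogeneousComponent lam (g i)).symm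
  rw [← htop, ← weightedHomogeneousComponent_aeval_of_le hbound
    (weightedTotalDegree'_le_maxWeight lam' f), hfsyz, map_zero]

/-- Let `S = k[x_1,…,x_q]`, `λ` an integral weight function and
`g_1,…,g_N` nonzero polynomials.  Define `λ̃` on `S[ε_1,…,ε_N]` by `λ̃(x_j) = λ(x_j)`
and `λ̃(ε_i) = λ(in_λ(g_i))`.  Then for every nonzero `f ∈ (ε_1,…,ε_N)` with
`f(ε_i ↦ g_i) = 0`, the initial form `in_{λ̃}(f)` again lies in `(ε_1,…,ε_N)` and satisfies
`in_{λ̃}(f)(ε_i ↦ in_λ(g_i)) = 0`: the `λ̃`-initial form of a syzygy of `(g_1,…,g_N)` is a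
syzygy of the initial forms `(in_λ(g_1),…,in_λ(g_N))`. -/
theorem initialForm_syzygy_is_syzygy_of_initialForms
    {k : Type*} [Field k] (q N : ℕ) (lam : Fin q → ℤ)
    (g : Fin N → MvPolynomial (Fin q) k)
    (hg0 : ∀ i, g i ≠ 0)
    (f : MvPolynomial (Fin q ⊕ Fin N) k) (hf : f ≠ 0)
    (hfε : f ∈ Ideal.span (Set.range fun i : Fin N =>
      (X (Sum.inr i) : MvPolynomial (Fin q ⊕ Fin N) k)))
    (hfsyz : aeval (Sum.elim X g) f = 0) :
    initialForm (Sum.elim lam fun i => maxWeight lam (g i)) f ∈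
        Ideal.span (Set.range fun i : Fin N =>
          (X (Sum.inr i) : MvPolynomial (Fin q ⊕ Fin N) k)) ∧
    aeval (Sum.elim X fun i => initialForm lam (g i))
        (initialForm (Sum.elim lam fun i => maxWeight lam (g i)) f) = 0 :=
  initialForm_syzygy_is_syzygy_of_initialForms_general q N lam g f hfε hfsyz
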